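/- arXiv:2512.08176 — 5 statements merged into one kernel-verified Lean document; each statement's English description precedes it below -/
import Mathlib

section
/- The functional L is coordinate l-smooth on ℝ^p × L²(P) with l = l₀ + 1/γ: for all θ, θ̃ ∈ ℝ^p and T, T̃ ∈ L²(P), (1) ‖∂_θL(θ̃,T) − ∂_θL(θ,T)‖ ≤ l₀‖θ̃ − θ‖; (2) ‖∂_θL(θ,T̃) − ∂_θL(θ,T)‖ ≤ l₀‖T̃ − T‖_{L²(P)}; (3) ‖∂_TL(θ̃,T) − ∂_TL(θ,T)‖_{L²(P)} ≤ l₀‖θ̃ − θ‖; (4) ‖∂_TL(θ,T̃) − ∂_TL(θ,T)‖_{L²(P)} ≤ (l₀ + 1/γ)‖T̃ − T‖_{L²(P)}. -/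
/-!
Each coordinate difference of `∇ℓ` is bounded pointwise by the joint `l₀`-Lipschitz bound,
specialized to a move in one variable. For `∂_θL` this bound is integrated and the mean of
`‖T' - T‖` is controlled by its `L²(P)` norm (Jensen, as a nonnegative variance); for `∂_TL` its
square is integrated, the proximal term `-(T - x)/γ` adding `1/γ` to the constant.
-/

open MeasureTheory ProbabilityTheory

section JointlyLipschitz

variable {E F G H : Type*} [SeminormedAddCommGroup E] [SeminormedAddCommGroup F]
  [SeminormedAddCommGroup G] [SeminormedAddCommGroup H]

/-- `(θ, v) ↦ (f θ v, g θ v)` is `l₀`-Lipschitz for the Euclidean norms on `E × F` and `G × H`. -/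
def JointlyLipschitzWith (l₀ : ℝ) (f : E → F → G) (g : E → F → H) : Prop :=
  ∀ θ v θ' v', √(‖f θ' v' - f θ v‖ ^ 2 + ‖g θ' v' - g θ v‖ ^ 2)
    ≤ l₀ * √(‖θ' - θ‖ ^ 2 + ‖v' - v‖ ^ 2)

namespace JointlyLipschitzWith

variable {l₀ : ℝ} {f : E → F → G} {g : E → F → H}

theorem swap (h : JointlyLipschitzWith l₀ f g) : JointlyLipschitzWith l₀ g f :=
  fun θ v θ' v' => by simpa only [add_comm (‖f θ' v' - f θ v‖ ^ 2)] using h θ v θ' v'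

theorem norm_sub_le (h : JointlyLipschitzWith l₀ f g) (θ : E) (v : F) (θ' : E) (v' : F) :
    ‖f θ' v' - f θ v‖ ≤ l₀ * √(‖θ' - θ‖ ^ 2 + ‖v' - v‖ ^ 2) :=
  calc ‖f θ' v' - f θ v‖ = |‖f θ' v' - f θ v‖| := (abs_norm _).symm
    _ ≤ √(‖f θ' v' - f θ v‖ ^ 2 + ‖g θ' v' - g θ v‖ ^ 2) :=
      Real.abs_le_sqrt (le_add_of_nonneg_right (sq_nonneg _))
    _ ≤ _ := h θ v θ' v'

theorem norm_sub_le_fst (h : JointlyLipschitzWith l₀ f g) (θ θ' : E) (v : F) :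
    ‖f θ' v - f θ v‖ ≤ l₀ * ‖θ' - θ‖ := by
  simpa using h.norm_sub_le θ v θ' v

theorem norm_sub_le_snd (h : JointlyLipschitzWith l₀ f g) (θ : E) (v v' : F) :
    ‖f θ v' - f θ v‖ ≤ l₀ * ‖v' - v‖ := by
  simpa using h.norm_sub_le θ v θ v'

theorem lipschitzWith_snd (h : JointlyLipschitzWith l₀ f g) (hl₀ : 0 ≤ l₀) (θ : E) :
    LipschitzWith l₀.toNNReal (f θ) :=
  LipschitzWith.of_dist_le_mul fun v v' => by
    simpa [dist_eq_norm, hl₀] using h.norm_sub_le_snd θ v' v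

end JointlyLipschitzWith

end JointlyLipschitz

theorem norm_sub_smul_sub_le {E : Type*} [SeminormedAddCommGroup E] [NormedSpace ℝ E]
    {a a' b b' x : E} {l r : ℝ} (hr : 0 ≤ r) (ha : ‖a' - a‖ ≤ l * ‖b' - b‖) :
    ‖(a' - r • (b' - x)) - (a - r • (b - x))‖ ≤ (l + r) * ‖b' - b‖ :=
  calc ‖(a' - r • (b' - x)) - (a - r • (b - x))‖ = ‖(a' - a) - r • (b' - b)‖ := by
        rw [smul_sub, smul_sub, smul_sub]
        abel_nf
    _ ≤ ‖a' - a‖ + ‖r • (b' - b)‖ := norm_sub_le _ _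
    _ ≤ l * ‖b' - b‖ + r * ‖b' - b‖ := by
        rw [norm_smul, Real.norm_of_nonneg hr]
        exact add_le_add_left ha _
    _ = (l + r) * ‖b' - b‖ := by ring

section Integrals

variable {α E F : Type*} [MeasurableSpace α] {μ : Measure α}
  [NormedAddCommGroup E] [NormedAddCommGroup F]

theorem LipschitzWith.memLp_comp [IsFiniteMeasure μ] {K : NNReal} {φ : E → F} {S : α → E}
    {p : ENNReal} (hφ : LipschitzWith K φ) (hS : MemLp S p μ) : MemLp (φ ∘ S) p μ := by
  have hφ₀ : LipschitzWith K (fun v => φ v - φ 0) := by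
    simpa using hφ.sub (LipschitzWith.const (φ 0))
  convert (hφ₀.comp_memLp (by simp) hS).add (memLp_const (φ 0)) using 1
  ext x
  simp

theorem integral_le_sqrt_integral_sq [IsProbabilityMeasure μ] {f : α → ℝ} (hf : MemLp f 2 μ) :
    ∫ x, f x ∂μ ≤ √(∫ x, f x ^ 2 ∂μ) := by
  have hvar := variance_nonneg f μ
  rw [variance_eq_sub hf] at hvar
  exact Real.le_sqrt_of_sq_le (by simpa using hvar)

theorem norm_integral_sub_integral_le [NormedSpace ℝ E] [IsProbabilityMeasure μ]
    {A B : α → E} {S : α → F} {c : ℝ} (hA : Integrable A μ) (hB : Integrable B μ)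
    (hS : MemLp S 2 μ) (hc : 0 ≤ c) (hAB : ∀ x, ‖A x - B x‖ ≤ c * ‖S x‖) :
    ‖∫ x, A x ∂μ - ∫ x, B x ∂μ‖ ≤ c * √(∫ x, ‖S x‖ ^ 2 ∂μ) :=
  calc ‖∫ x, A x ∂μ - ∫ x, B x ∂μ‖ = ‖∫ x, (A x - B x) ∂μ‖ := by rw [integral_sub hA hB]
    _ ≤ ∫ x, ‖A x - B x‖ ∂μ := norm_integral_le_integral_norm _
    _ ≤ ∫ x, c * ‖S x‖ ∂μ :=
      integral_mono_of_nonneg (.of_forall fun _ => norm_nonneg _)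
        ((hS.integrable one_le_two).norm.const_mul c) (.of_forall hAB)
    _ = c * ∫ x, ‖S x‖ ∂μ := integral_const_mul _ _
    _ ≤ c * √(∫ x, ‖S x‖ ^ 2 ∂μ) :=
      mul_le_mul_of_nonneg_left (integral_le_sqrt_integral_sq hS.norm) hc

theorem sqrt_integral_norm_sq_le {A : α → E} {S : α → F} {c : ℝ} (hS : MemLp S 2 μ)
    (hc : 0 ≤ c) (hA : ∀ x, ‖A x‖ ≤ c * ‖S x‖) :
    √(∫ x, ‖A x‖ ^ 2 ∂μ) ≤ c * √(∫ x, ‖S x‖ ^ 2 ∂μ) :=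
  calc √(∫ x, ‖A x‖ ^ 2 ∂μ) ≤ √(∫ x, c ^ 2 * ‖S x‖ ^ 2 ∂μ) := by
        refine Real.sqrt_le_sqrt (integral_mono_of_nonneg (.of_forall fun _ => sq_nonneg _)
          (hS.norm.integrable_sq.const_mul _) (.of_forall fun x => ?_))
        dsimp only
        rw [← mul_pow]
        exact pow_le_pow_left₀ (norm_nonneg _) (hA x) 2
    _ = c * √(∫ x, ‖S x‖ ^ 2 ∂μ) := by
        rw [integral_const_mul, Real.sqrt_mul (sq_nonneg c), Real.sqrt_sq hc]

end Integrals

theorem coordinate_smoothness_of_L_general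
    {d p : ℕ} (P : Measure (EuclideanSpace ℝ (Fin d))) [IsProbabilityMeasure P]
    (gθ : EuclideanSpace ℝ (Fin p) → EuclideanSpace ℝ (Fin d) → EuclideanSpace ℝ (Fin p))
    (gv : EuclideanSpace ℝ (Fin p) → EuclideanSpace ℝ (Fin d) → EuclideanSpace ℝ (Fin d))
    (l₀ γ : ℝ) (hl₀ : 0 ≤ l₀) (hγ : 0 < γ)
    (hsmooth : ∀ θ v θ' v',
      Real.sqrt (‖gθ θ' v' - gθ θ v‖ ^ 2 + ‖gv θ' v' - gv θ v‖ ^ 2)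
        ≤ l₀ * Real.sqrt (‖θ' - θ‖ ^ 2 + ‖v' - v‖ ^ 2))
    (θ θ' : EuclideanSpace ℝ (Fin p))
    (T T' : EuclideanSpace ℝ (Fin d) → EuclideanSpace ℝ (Fin d))
    (hT : MemLp T 2 P) (hT' : MemLp T' 2 P) :
    ‖(∫ x, gθ θ' (T x) ∂P) - (∫ x, gθ θ (T x) ∂P)‖ ≤ l₀ * ‖θ' - θ‖ ∧
    ‖(∫ x, gθ θ (T' x) ∂P) - (∫ x, gθ θ (T x) ∂P)‖
        ≤ l₀ * Real.sqrt (∫ x, ‖T' x - T x‖ ^ 2 ∂P) ∧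
    Real.sqrt (∫ x, ‖(gv θ' (T x) - γ⁻¹ • (T x - x)) - (gv θ (T x) - γ⁻¹ • (T x - x))‖ ^ 2 ∂P)
        ≤ l₀ * ‖θ' - θ‖ ∧
    Real.sqrt (∫ x, ‖(gv θ (T' x) - γ⁻¹ • (T' x - x)) - (gv θ (T x) - γ⁻¹ • (T x - x))‖ ^ 2 ∂P)
        ≤ (l₀ + γ⁻¹) * Real.sqrt (∫ x, ‖T' x - T x‖ ^ 2 ∂P) := by
  have h : JointlyLipschitzWith l₀ gθ gv := hsmooth
  have hint : ∀ θ₀ {S : EuclideanSpace ℝ (Fin d) → EuclideanSpace ℝ (Fin d)}, MemLp S 2 P →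
      Integrable (fun x => gθ θ₀ (S x)) P :=
    fun θ₀ _ hS => ((h.lipschitzWith_snd hl₀ θ₀).memLp_comp hS).integrable one_le_two
  have hdθ := memLp_const (μ := P) (p := 2) (θ' - θ)
  have hdθ_norm : √(∫ _x, ‖θ' - θ‖ ^ 2 ∂P) = ‖θ' - θ‖ := by simp
  refine ⟨?_, ?_, ?_, ?_⟩
  · rw [← hdθ_norm]
    exact norm_integral_sub_integral_le (hint θ' hT) (hint θ hT) hdθ hl₀
      fun x => h.norm_sub_le_fst θ θ' (T x)
  · exact norm_integral_sub_integral_le (hint θ hT') (hint θ hT) (hT'.sub hT) hl₀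
      fun x => h.norm_sub_le_snd θ (T x) (T' x)
  · rw [← hdθ_norm]
    refine sqrt_integral_norm_sq_le hdθ hl₀ fun x => ?_
    rw [sub_sub_sub_cancel_right]
    exact h.swap.norm_sub_le_fst θ θ' (T x)
  · exact sqrt_integral_norm_sq_le (hT'.sub hT) (by positivity) fun x =>
      norm_sub_smul_sub_le (inv_nonneg.2 hγ.le) (h.swap.norm_sub_le_snd θ (T x) (T' x))

/-- Coordinate smoothness of
`L(θ,T) = E_{x∼P}[ℓ(θ,T(x)) − ‖T(x)−x‖²/(2γ)]` on `ℝ^p × L²(P)`, where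
`∂_θL(θ,T) = E_{x∼P}[∂_θℓ(θ,T(x))]` and `∂_TL(θ,T)(x) = ∂_vℓ(θ,T(x)) − (1/γ)(T(x)−x)`:
the four coordinate-Lipschitz inequalities hold with constants `l₀, l₀, l₀, l₀ + 1/γ`. -/
theorem coordinate_smoothness_of_L
    {d p : ℕ} (P : Measure (EuclideanSpace ℝ (Fin d))) [IsProbabilityMeasure P]
    (hP2 : Integrable (fun x => ‖x‖ ^ 2) P)
    (ℓ : EuclideanSpace ℝ (Fin p) → EuclideanSpace ℝ (Fin d) → ℝ)
    (gθ : EuclideanSpace ℝ (Fin p) → EuclideanSpace ℝ (Fin d) → EuclideanSpace ℝ (Fin p))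
    (gv : EuclideanSpace ℝ (Fin p) → EuclideanSpace ℝ (Fin d) → EuclideanSpace ℝ (Fin d))
    (l₀ γ : ℝ) (hl₀ : 0 ≤ l₀) (hγ : 0 < γ)
    (hgθ : ∀ θ v, HasGradientAt (fun θ' => ℓ θ' v) (gθ θ v) θ)
    (hgv : ∀ θ v, HasGradientAt (fun v' => ℓ θ v') (gv θ v) v)
    (hsmooth : ∀ θ v θ' v',
      Real.sqrt (‖gθ θ' v' - gθ θ v‖ ^ 2 + ‖gv θ' v' - gv θ v‖ ^ 2)
        ≤ l₀ * Real.sqrt (‖θ' - θ‖ ^ 2 + ‖v' - v‖ ^ 2))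
    (θ θ' : EuclideanSpace ℝ (Fin p))
    (T T' : EuclideanSpace ℝ (Fin d) → EuclideanSpace ℝ (Fin d))
    (hT : MemLp T 2 P) (hT' : MemLp T' 2 P) :
    ‖(∫ x, gθ θ' (T x) ∂P) - (∫ x, gθ θ (T x) ∂P)‖ ≤ l₀ * ‖θ' - θ‖ ∧
    ‖(∫ x, gθ θ (T' x) ∂P) - (∫ x, gθ θ (T x) ∂P)‖
        ≤ l₀ * Real.sqrt (∫ x, ‖T' x - T x‖ ^ 2 ∂P) ∧
    Real.sqrt (∫ x, ‖(gv θ' (T x) - γ⁻¹ • (T x - x)) - (gv θ (T x) - γ⁻¹ • (T x - x))‖ ^ 2 ∂P)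
        ≤ l₀ * ‖θ' - θ‖ ∧
    Real.sqrt (∫ x, ‖(gv θ (T' x) - γ⁻¹ • (T' x - x)) - (gv θ (T x) - γ⁻¹ • (T x - x))‖ ^ 2 ∂P)
        ≤ (l₀ + γ⁻¹) * Real.sqrt (∫ x, ‖T' x - T x‖ ^ 2 ∂P) :=
  coordinate_smoothness_of_L_general P gθ gv l₀ γ hl₀ hγ hsmooth θ θ' T T' hT hT'
end

section
/- Under the μ-PL-in-T assumption, for each θ ∈ ℝ^p the maximizer map x ↦ v*(θ;x) is (γμ)⁻¹-Lipschitz on a set of full P-measure, i.e., there is a measurable set A with P(A) = 1 such that ‖v*(θ;x̃) − v*(θ;x)‖ ≤ (γμ)⁻¹‖x̃ − x‖ for all x, x̃ ∈ A; consequently T*(θ) given by T*(θ)(x) = v*(θ;x) belongs to L²(P). -/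
/-!
Fix `θ` and write `h_x := ℓ θ · - ‖· - x‖² / (2γ)`. Wherever `h* - h_x > 0`, the PL inequality says
that `√(h* - h_x)` has slope at least `√(μ/2)`. Minimising `√(h* - h_x) + c'‖· - v‖` over a closed
ball (compactness replacing Ekeland's principle) shows that for `c' < √(μ/2)` this function is at
least `c'` times the distance to its zero set `{v*(x)}`; letting `c' → √(μ/2)` and squaring gives
quadratic growth `μ/2 ‖v - v*(x)‖² ≤ h* - h_x(v)`. Since `∇h_y(v*(x)) = γ⁻¹ (y - x)`, the PL
inequality at `y`, evaluated at `v*(x)`, and quadratic growth at `y` give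
`μ² ‖v*(x) - v*(y)‖² ≤ γ⁻² ‖y - x‖²`. A map that is Lipschitz on a set of full measure is in `L²` when `P` has a second moment.
-/

open MeasureTheory Filter Topology Metric

section ErrorBound

variable {E : Type*} [NormedAddCommGroup E] [NormedSpace ℝ E]

theorem HasFDerivAt.norm_le_of_eventually_sub_le {φ : E → ℝ} {φ' : E →L[ℝ] ℝ} {z : E} {c : ℝ}
    (hφ : HasFDerivAt φ φ' z) (hc : 0 ≤ c) (h : ∀ᶠ w in 𝓝 z, φ z - c * ‖w - z‖ ≤ φ w) :
    ‖φ'‖ ≤ c := by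
  have hlower : ∀ u, -(c * ‖u‖) ≤ φ' u := by
    intro u
    have hline : Tendsto (fun t : ℝ => z + t • u) (𝓝[>] 0) (𝓝 z) := by
      have : Continuous (fun t : ℝ => z + t • u) := by fun_prop
      simpa using (this.tendsto 0).mono_left nhdsWithin_le_nhds
    refine ge_of_tendsto ((hφ.hasLineDerivAt u).tendsto_slope_zero_right) ?_
    filter_upwards [hline.eventually h, self_mem_nhdsWithin] with t ht (htpos : 0 < t)
    rw [add_sub_cancel_left, norm_smul, Real.norm_of_nonneg htpos.le] at ht
    rw [smul_eq_mul, le_inv_mul_iff₀ htpos]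
    linarith
  refine φ'.opNorm_le_bound hc fun u => abs_le.mpr ⟨hlower u, ?_⟩
  simpa [neg_le] using hlower (-u)

variable [ProperSpace E] {G : E → ℝ} {c : ℝ}

theorem exists_eq_zero_mul_dist_le_of_lt (hG : Continuous G) (hG₀ : ∀ x, 0 ≤ G x)
    (hslope : ∀ z, 0 < G z → ∃ G' : E →L[ℝ] ℝ, HasFDerivAt G G' z ∧ c ≤ ‖G'‖)
    {c' : ℝ} (hc' : 0 < c') (hc'c : c' < c) (x : E) :
    ∃ z, G z = 0 ∧ c' * dist x z ≤ G x := by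
  rcases (hG₀ x).eq_or_lt with hx | hx
  · exact ⟨x, hx.symm, by simp [← hx]⟩
  set R := G x / c'
  have hR : G x = c' * R := (mul_div_cancel₀ _ hc'.ne').symm
  obtain ⟨z, hz, hmin⟩ := (isCompact_closedBall x R).exists_isMinOn
    (nonempty_closedBall.mpr (by positivity))
    (by fun_prop : Continuous fun w => G w + c' * dist x w).continuousOn
  have hzx : G z + c' * dist x z ≤ G x := by
    simpa using hmin (mem_closedBall_self (by positivity))
  refine ⟨z, ?_, by linarith [hG₀ z]⟩
  by_contra hz0
  have hzpos : 0 < G z := (hG₀ z).lt_of_ne' hz0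
  have hz_in : z ∈ ball x R := by
    rw [mem_ball']; nlinarith
  obtain ⟨G', hG', hcG'⟩ := hslope z hzpos
  have hcalm : ∀ᶠ w in 𝓝 z, G z - c' * ‖w - z‖ ≤ G w := by
    filter_upwards [isOpen_ball.mem_nhds hz_in] with w hw
    have hzw : G z + c' * dist x z ≤ G w + c' * dist x w := hmin (ball_subset_closedBall hw)
    have htri : dist x w ≤ dist x z + ‖w - z‖ := dist_eq_norm w z ▸ dist_triangle_right x w z
    nlinarith
  linarith [hG'.norm_le_of_eventually_sub_le hc'.le hcalm]

theorem mul_infDist_le_of_le_norm_fderiv (hG : Continuous G) (hG₀ : ∀ x, 0 ≤ G x)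
    (hslope : ∀ z, 0 < G z → ∃ G' : E →L[ℝ] ℝ, HasFDerivAt G G' z ∧ c ≤ ‖G'‖) (x : E) :
    c * infDist x (G ⁻¹' {0}) ≤ G x := by
  have hlt : ∀ c' ∈ Set.Iio c, c' * infDist x (G ⁻¹' {0}) ≤ G x := by
    intro c' hc'c
    rcases le_or_gt c' 0 with hc' | hc'
    · exact (mul_nonpos_of_nonpos_of_nonneg hc' infDist_nonneg).trans (hG₀ x)
    obtain ⟨z, hz, hzx⟩ := exists_eq_zero_mul_dist_le_of_lt hG hG₀ hslope hc' hc'c x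
    have hdist : infDist x (G ⁻¹' {0}) ≤ dist x z := infDist_le_dist_of_mem hz
    exact (mul_le_mul_of_nonneg_left hdist hc'.le).trans hzx
  have hlim : Tendsto (fun c' => c' * infDist x (G ⁻¹' {0})) (𝓝[<] c)
      (𝓝 (c * infDist x (G ⁻¹' {0}))) :=
    (tendsto_id.mul_const _).mono_left nhdsWithin_le_nhds
  exact le_of_tendsto hlim (eventually_nhdsWithin_of_forall hlt)

end ErrorBound

section PL

variable {E : Type*} [NormedAddCommGroup E]

structure IsPLMax (φ : E → ℝ) (φ' : E → E) (μ : ℝ) (v : E) : Prop where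
  le_max : ∀ w, φ w ≤ φ v
  eq_of_isMax : ∀ w, (∀ u, φ u ≤ φ w) → w = v
  pl : ∀ w, μ * (φ v - φ w) ≤ 1 / 2 * ‖φ' w‖ ^ 2

theorem IsPLMax.sqrt_mul_le_norm_grad {φ : E → ℝ} {φ' : E → E} {μ : ℝ} {v : E}
    (h : IsPLMax φ φ' μ v) (hμ : 0 < μ) (w : E) :
    2 * √(μ / 2) * √(φ v - φ w) ≤ ‖φ' w‖ := by
  have hF : 0 ≤ φ v - φ w := sub_nonneg.mpr (h.le_max w)
  rw [← pow_le_pow_iff_left₀ (by positivity) (norm_nonneg _) two_ne_zero, mul_pow, mul_pow,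
    Real.sq_sqrt (by positivity), Real.sq_sqrt hF]
  linarith [h.pl w]

open InnerProductSpace in
theorem IsPLMax.quadratic_growth [InnerProductSpace ℝ E] [ProperSpace E] {φ : E → ℝ}
    {φ' : E → E} {μ : ℝ} {v : E}
    (hφ : ∀ w, HasGradientAt φ (φ' w) w) (h : IsPLMax φ φ' μ v) (hμ : 0 < μ) (w : E) :
    μ / 2 * ‖w - v‖ ^ 2 ≤ φ v - φ w := by
  have hF : ∀ u, HasFDerivAt (fun u => φ v - φ u) (-toDual ℝ E (φ' u)) u := fun u => by
    simpa using (hφ u).hasFDerivAt.const_sub (φ v)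
  have hcont : Continuous fun u => √(φ v - φ u) :=
    (continuous_iff_continuousAt.2 fun u => (hF u).continuousAt).sqrt
  have hslope : ∀ z, 0 < √(φ v - φ z) → ∃ G' : E →L[ℝ] ℝ,
      HasFDerivAt (fun u => √(φ v - φ u)) G' z ∧ √(μ / 2) ≤ ‖G'‖ := by
    intro z hz
    refine ⟨_, (hF z).sqrt (Real.sqrt_pos.mp hz).ne', ?_⟩
    rw [norm_smul, norm_neg, LinearIsometryEquiv.norm_map, Real.norm_of_nonneg (by positivity),
      one_div, inv_mul_eq_div, le_div_iff₀ (by positivity)]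
    linarith [h.sqrt_mul_le_norm_grad hμ z]
  have hzero : (fun u => √(φ v - φ u)) ⁻¹' {0} = {v} := by
    ext u
    simp only [Set.mem_preimage, Set.mem_singleton_iff, Real.sqrt_eq_zero', sub_nonpos]
    exact ⟨fun hu => h.eq_of_isMax u fun w => (h.le_max w).trans hu, fun hu => hu ▸ le_rfl⟩
  have hbound := mul_infDist_le_of_le_norm_fderiv hcont (fun u => Real.sqrt_nonneg _) hslope w
  rw [hzero, infDist_singleton, dist_eq_norm] at hbound
  have hsq := pow_le_pow_left₀ (by positivity) hbound 2
  rwa [mul_pow, Real.sq_sqrt (by positivity), Real.sq_sqrt (sub_nonneg.mpr (h.le_max w))] at hsq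

noncomputable def penalized (f : E → ℝ) (γ : ℝ) (x v : E) : ℝ := f v - ‖v - x‖ ^ 2 / (2 * γ)

variable [InnerProductSpace ℝ E] [CompleteSpace E]

theorem HasGradientAt.penalized {f : E → ℝ} {f' : E} {v : E} (hf : HasGradientAt f f' v)
    (γ : ℝ) (x : E) : HasGradientAt (penalized f γ x) (f' - γ⁻¹ • (v - x)) v := by
  have hq : HasFDerivAt (fun w => ‖w - x‖ ^ 2 / (2 * γ))
      ((2 * γ)⁻¹ • (2 • innerSL ℝ (v - x))) v := by
    simpa [div_eq_mul_inv, mul_comm] using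
      ((hasFDerivAt_id v).sub_const x).norm_sq.mul_const (2 * γ)⁻¹
  rw [hasGradientAt_iff_hasFDerivAt]
  refine (hf.hasFDerivAt.sub hq).congr_fderiv ?_
  ext u
  simp
  ring

open InnerProductSpace in
theorem norm_sub_le_of_isPLMax_penalized [ProperSpace E] {f : E → ℝ} {f' : E → E}
    (hf : ∀ v, HasGradientAt f (f' v) v) {γ μ : ℝ} (hγ : 0 < γ) (hμ : 0 < μ) {x y vx vy : E}
    (hx : ∀ w, penalized f γ x w ≤ penalized f γ x vx)
    (hy : IsPLMax (penalized f γ y) (fun v => f' v - γ⁻¹ • (v - y)) μ vy) :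
    ‖vy - vx‖ ≤ (γ * μ)⁻¹ * ‖y - x‖ := by
  have hlocal : IsLocalMax (penalized f γ x) vx := Eventually.of_forall hx
  have hstat : f' vx - γ⁻¹ • (vx - x) = 0 :=
    (toDual ℝ E).map_eq_zero_iff.mp
      (hlocal.hasFDerivAt_eq_zero ((hf vx).penalized γ x).hasFDerivAt)
  have hgrad : f' vx - γ⁻¹ • (vx - y) = γ⁻¹ • (y - x) := by
    rw [sub_eq_zero.mp hstat, ← smul_sub, sub_sub_sub_cancel_left]
  have hgrowth := hy.quadratic_growth (fun v => (hf v).penalized γ y) hμ vx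
  have hpl := hy.pl vx
  rw [hgrad, norm_smul, Real.norm_of_nonneg (by positivity)] at hpl
  rw [norm_sub_rev] at hgrowth
  have hsq : (μ * ‖vy - vx‖) ^ 2 ≤ (γ⁻¹ * ‖y - x‖) ^ 2 := by nlinarith
  rw [mul_inv_rev, mul_assoc, le_inv_mul_iff₀ hμ]
  exact (pow_le_pow_iff_left₀ (by positivity) (by positivity) two_ne_zero).mp hsq

end PL

theorem LipschitzOnWith.memLp_of_ae_mem {α β : Type*} [NormedAddCommGroup α]
    [MeasurableSpace α] [OpensMeasurableSpace α] [SecondCountableTopology α] [NormedAddCommGroup β]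
    {P : Measure α} [IsFiniteMeasure P] {p : ENNReal} {f : α → β} {K : NNReal} {A : Set α}
    (hf : LipschitzOnWith K f A) (hA : MeasurableSet A) (hAP : ∀ᵐ x ∂P, x ∈ A)
    (hid : MemLp id p P) : MemLp f p P := by
  rcases A.eq_empty_or_nonempty with rfl | ⟨x₀, hx₀⟩
  · have hP : P = 0 := by simpa using hAP
    rw [hP]; exact memLp_measure_zero
  have hmeas : AEStronglyMeasurable f P := by
    rw [← Measure.restrict_eq_self_of_ae_mem hAP]
    exact hf.continuousOn.aestronglyMeasurable hA
  have hbound : MemLp (fun x => ‖f x₀‖ + K * ‖x - x₀‖) p P := by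
    have h1 : MemLp (fun x => x - x₀) p P := hid.sub (memLp_const x₀)
    have h2 : MemLp (fun x => (K : ℝ) * ‖x - x₀‖) p P := h1.norm.const_mul _
    exact (memLp_const (‖f x₀‖ : ℝ)).add h2
  refine hbound.of_le hmeas ?_
  filter_upwards [hAP] with x hx
  rw [Real.norm_of_nonneg (by positivity)]
  calc ‖f x‖ ≤ ‖f x₀‖ + ‖f x - f x₀‖ := norm_le_insert' _ _
    _ ≤ ‖f x₀‖ + K * ‖x - x₀‖ := by gcongr; exact hf.norm_sub_le hx hx₀

theorem vstar_lipschitz_and_memLp_general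
    {d p : ℕ} (P : Measure (EuclideanSpace ℝ (Fin d))) [IsProbabilityMeasure P]
    (hP2 : Integrable (fun x => ‖x‖ ^ 2) P)
    (ℓ : EuclideanSpace ℝ (Fin p) → EuclideanSpace ℝ (Fin d) → ℝ)
    (gv : EuclideanSpace ℝ (Fin p) → EuclideanSpace ℝ (Fin d) → EuclideanSpace ℝ (Fin d))
    (γ μ : ℝ) (hγ : 0 < γ) (hμ : 0 < μ)
    (hgv : ∀ θ v, HasGradientAt (fun v' => ℓ θ v') (gv θ v) v)
    (vstar : EuclideanSpace ℝ (Fin p) → EuclideanSpace ℝ (Fin d) → EuclideanSpace ℝ (Fin d))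
    (hmax : ∀ θ, ∀ᵐ x ∂P, ∀ v,
      ℓ θ v - ‖v - x‖ ^ 2 / (2 * γ) ≤ ℓ θ (vstar θ x) - ‖vstar θ x - x‖ ^ 2 / (2 * γ))
    (huniq : ∀ θ, ∀ᵐ x ∂P, ∀ v,
      (∀ w, ℓ θ w - ‖w - x‖ ^ 2 / (2 * γ) ≤ ℓ θ v - ‖v - x‖ ^ 2 / (2 * γ)) → v = vstar θ x)
    (hPL : ∀ θ, ∀ᵐ x ∂P, ∀ v,
      μ * ((ℓ θ (vstar θ x) - ‖vstar θ x - x‖ ^ 2 / (2 * γ)) - (ℓ θ v - ‖v - x‖ ^ 2 / (2 * γ)))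
        ≤ (1 / 2) * ‖gv θ v - γ⁻¹ • (v - x)‖ ^ 2)
    :
    ∀ θ, ∃ A : Set (EuclideanSpace ℝ (Fin d)), MeasurableSet A ∧ P A = 1 ∧
      (∀ x ∈ A, ∀ y ∈ A, ‖vstar θ y - vstar θ x‖ ≤ (γ * μ)⁻¹ * ‖y - x‖) ∧
      MemLp (vstar θ) 2 P := by
  intro θ
  have hgood : ∀ᵐ x ∂P,
      IsPLMax (penalized (ℓ θ) γ x) (fun v => gv θ v - γ⁻¹ • (v - x)) μ (vstar θ x) := by
    filter_upwards [hmax θ, huniq θ, hPL θ] with x hx₁ hx₂ hx₃ using ⟨hx₁, hx₂, hx₃⟩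
  obtain ⟨A, hA_ae, hA, hA_good⟩ := hgood.exists_measurable_mem
  have hlip : ∀ x ∈ A, ∀ y ∈ A, ‖vstar θ y - vstar θ x‖ ≤ (γ * μ)⁻¹ * ‖y - x‖ :=
    fun x hx y hy => norm_sub_le_of_isPLMax_penalized (hgv θ) hγ hμ (hA_good x hx).le_max
      (hA_good y hy)
  have hlipOn : LipschitzOnWith (Real.toNNReal (γ * μ)⁻¹) (vstar θ) A :=
    LipschitzOnWith.of_dist_le_mul fun x hx y hy => by
      rw [dist_eq_norm, dist_eq_norm, Real.coe_toNNReal _ (by positivity)]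
      exact hlip y hy x hx
  have hid : MemLp id 2 P := (memLp_two_iff_integrable_sq_norm aestronglyMeasurable_id).mpr hP2
  exact ⟨A, hA, (prob_compl_eq_zero_iff hA).mp (mem_ae_iff.mp hA_ae), hlip,
    hlipOn.memLp_of_ae_mem hA hA_ae hid⟩

/-- Under the μ-PL-in-T assumption, for each θ the maximizer map
`x ↦ v*(θ;x)` is `(γμ)⁻¹`-Lipschitz on a set of full P-measure, and consequently
`T*(θ) := v*(θ;·)` belongs to `L²(P)`. -/
theorem vstar_lipschitz_and_memLp
    {d p : ℕ} (P : Measure (EuclideanSpace ℝ (Fin d))) [IsProbabilityMeasure P]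
    (hP2 : Integrable (fun x => ‖x‖ ^ 2) P)
    (ℓ : EuclideanSpace ℝ (Fin p) → EuclideanSpace ℝ (Fin d) → ℝ)
    (gθ : EuclideanSpace ℝ (Fin p) → EuclideanSpace ℝ (Fin d) → EuclideanSpace ℝ (Fin p))
    (gv : EuclideanSpace ℝ (Fin p) → EuclideanSpace ℝ (Fin d) → EuclideanSpace ℝ (Fin d))
    (l₀ γ μ : ℝ) (hl₀ : 0 ≤ l₀) (hγ : 0 < γ) (hμ : 0 < μ)
    (hgθ : ∀ θ v, HasGradientAt (fun θ' => ℓ θ' v) (gθ θ v) θ)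
    (hgv : ∀ θ v, HasGradientAt (fun v' => ℓ θ v') (gv θ v) v)
    (hsmooth : ∀ θ v θ' v',
      Real.sqrt (‖gθ θ' v' - gθ θ v‖ ^ 2 + ‖gv θ' v' - gv θ v‖ ^ 2)
        ≤ l₀ * Real.sqrt (‖θ' - θ‖ ^ 2 + ‖v' - v‖ ^ 2))
    (vstar : EuclideanSpace ℝ (Fin p) → EuclideanSpace ℝ (Fin d) → EuclideanSpace ℝ (Fin d))
    (hmax : ∀ θ, ∀ᵐ x ∂P, ∀ v,
      ℓ θ v - ‖v - x‖ ^ 2 / (2 * γ) ≤ ℓ θ (vstar θ x) - ‖vstar θ x - x‖ ^ 2 / (2 * γ))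
    (huniq : ∀ θ, ∀ᵐ x ∂P, ∀ v,
      (∀ w, ℓ θ w - ‖w - x‖ ^ 2 / (2 * γ) ≤ ℓ θ v - ‖v - x‖ ^ 2 / (2 * γ)) → v = vstar θ x)
    (hPL : ∀ θ, ∀ᵐ x ∂P, ∀ v,
      μ * ((ℓ θ (vstar θ x) - ‖vstar θ x - x‖ ^ 2 / (2 * γ)) - (ℓ θ v - ‖v - x‖ ^ 2 / (2 * γ)))
        ≤ (1 / 2) * ‖gv θ v - γ⁻¹ • (v - x)‖ ^ 2)
    :
    ∀ θ, ∃ A : Set (EuclideanSpace ℝ (Fin d)), MeasurableSet A ∧ P A = 1 ∧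
      (∀ x ∈ A, ∀ y ∈ A, ‖vstar θ y - vstar θ x‖ ≤ (γ * μ)⁻¹ * ‖y - x‖) ∧
      MemLp (vstar θ) 2 P :=
  vstar_lipschitz_and_memLp_general P hP2 ℓ gv γ μ hγ hμ hgv vstar hmax huniq hPL
end

section
/- Under the μ-PL-in-T assumption, the map θ ↦ T*(θ) is κ-Lipschitz from ℝ^p to L²(P) with κ = l/μ and l = l₀ + 1/γ: ‖T*(θ̃) − T*(θ)‖_{L²(P)} ≤ κ‖θ̃ − θ‖ for all θ̃, θ ∈ ℝ^p. -/
/-! For fixed `x`, the objective `v ↦ h(θ', v; x)` has an `l`-Lipschitz gradient and satisfies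
the PL inequality, hence the error bound `μ ‖v - v*(θ')‖ ≤ ‖∇_v h(θ', v)‖`. This follows from
quadratic growth, which we get by running gradient ascent with step `η`: by PL and the descent
lemma its path length is at most `√(2 (h* - h(v)) / μ) / (1 - l η)`, its limit is a critical
point, hence the unique maximizer, and we let `η → 0`. At `v = v*(θ)` the gradient of
`h(θ, ·)` vanishes, so `∇_v h(θ', v)` is just the change of `∂_v ℓ` in `θ`, at most
`l₀ ‖θ' - θ‖`. The resulting pointwise bound `(l₀ / μ) ‖θ' - θ‖` integrates to the `L²` bound. -/

open MeasureTheory Filter Topology InnerProductSpace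

lemma mul_le_sqrt_sub_sqrt {a b c G μ : ℝ} (hμ : 0 < μ) (hb : 0 ≤ b) (hc : 0 ≤ c)
    (hG : 0 ≤ G) (hstep : b ≤ a - c * G ^ 2) (hPL : μ * a ≤ 1 / 2 * G ^ 2) :
    c * G ≤ √(2 * a / μ) - √(2 * b / μ) := by
  have hba : b ≤ a := by nlinarith [mul_nonneg hc (sq_nonneg G)]
  have ha : 0 ≤ a := hb.trans hba
  set A := √(2 * a / μ)
  set B := √(2 * b / μ)
  have hA2 : μ * A ^ 2 = 2 * a := by
    rw [Real.sq_sqrt (by positivity)]; field_simp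
  have hB2 : μ * B ^ 2 = 2 * b := by
    rw [Real.sq_sqrt (by positivity)]; field_simp
  have hBA : B ≤ A := Real.sqrt_le_sqrt (by gcongr)
  have hAG : μ * A ≤ G := by nlinarith
  rcases hG.eq_or_lt with rfl | hG
  · simpa using hBA
  have : c * G * G ≤ (A - B) * G := calc
    c * G * G ≤ a - b := by nlinarith
    _ = μ * (A - B) * (A + B) / 2 := by linear_combination (-hA2 + hB2) / 2
    _ ≤ μ * A * (A - B) := by nlinarith [mul_nonneg hμ.le (sub_nonneg.2 hBA)]
    _ ≤ (A - B) * G := by nlinarith [mul_le_mul_of_nonneg_left hAG (sub_nonneg.2 hBA)]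
  exact le_of_mul_le_mul_right this hG

lemma exists_tendsto_dist_le_of_dist_succ_le_sub {α : Type*} [PseudoMetricSpace α]
    [CompleteSpace α] {w : ℕ → α} {s : ℕ → ℝ} (hs : ∀ n, 0 ≤ s n)
    (h : ∀ n, dist (w n) (w (n + 1)) ≤ s n - s (n + 1)) :
    ∃ a, Tendsto w atTop (𝓝 a) ∧ dist (w 0) a ≤ s 0 := by
  have hd : ∀ n, 0 ≤ s n - s (n + 1) := fun n => dist_nonneg.trans (h n)
  have hsum : ∀ n, ∑ i ∈ Finset.range n, (s i - s (i + 1)) ≤ s 0 := fun n => by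
    rw [Finset.sum_range_sub']; linarith [hs n]
  have hsummable := summable_of_sum_range_le hd hsum
  obtain ⟨a, ha⟩ := cauchySeq_tendsto_of_complete (cauchySeq_of_dist_le_of_summable _ h hsummable)
  exact ⟨a, ha, (dist_le_tsum_of_dist_le_of_tendsto₀ _ h hsummable ha).trans
    (Real.tsum_le_of_sum_range_le hd hsum)⟩

section Ascent

variable {E : Type*} [NormedAddCommGroup E] [InnerProductSpace ℝ E] [CompleteSpace E]
  {f : E → ℝ} {g : E → E} {L : ℝ}

lemma add_inner_sub_mul_norm_sq_le (hL : 0 ≤ L) (hg : ∀ v, HasGradientAt f (g v) v)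
    (hLip : ∀ u v, ‖g u - g v‖ ≤ L * ‖u - v‖) (x y : E) :
    f x + ⟪g x, y - x⟫_ℝ - L * ‖y - x‖ ^ 2 ≤ f y := by
  have hmvt := (convex_segment x y).norm_image_sub_le_of_norm_hasFDerivWithin_le'
    (fun z _ => (hg z).hasFDerivAt.hasFDerivWithinAt) (φ := toDual ℝ E (g x)) (C := L * ‖y - x‖)
    (fun z hz => by
      rw [← map_sub, LinearIsometryEquiv.norm_map]
      exact (hLip z x).trans (by gcongr; exact norm_sub_le_of_mem_segment hz))
    (left_mem_segment ℝ x y) (right_mem_segment ℝ x y)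
  rw [toDual_apply_apply] at hmvt
  linarith [neg_abs_le (f y - f x - ⟪g x, y - x⟫_ℝ), (Real.norm_eq_abs _).symm ▸ hmvt]

lemma add_mul_norm_sq_le_apply_add_smul (hL : 0 ≤ L) (hg : ∀ v, HasGradientAt f (g v) v)
    (hLip : ∀ u v, ‖g u - g v‖ ≤ L * ‖u - v‖) (η : ℝ) (z : E) :
    f z + η * (1 - L * η) * ‖g z‖ ^ 2 ≤ f (z + η • g z) := by
  have h := add_inner_sub_mul_norm_sq_le hL hg hLip z (z + η • g z)
  rw [add_sub_cancel_left, real_inner_smul_right, real_inner_self_eq_norm_sq, norm_smul,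
    Real.norm_eq_abs, mul_pow, sq_abs] at h
  linarith

variable {μ : ℝ} {vs : E}

lemma mul_norm_smul_le_sqrt_sub_sqrt (hμ : 0 < μ) (hL : 0 ≤ L)
    (hg : ∀ v, HasGradientAt f (g v) v) (hLip : ∀ u v, ‖g u - g v‖ ≤ L * ‖u - v‖)
    (hmax : ∀ w, f w ≤ f vs) (hPL : ∀ v, μ * (f vs - f v) ≤ 1 / 2 * ‖g v‖ ^ 2)
    {η : ℝ} (hη : 0 ≤ η) (hLη : L * η ≤ 1) (z : E) :
    (1 - L * η) * ‖η • g z‖ ≤ √(2 * (f vs - f z) / μ) - √(2 * (f vs - f (z + η • g z)) / μ) := by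
  have hstep := add_mul_norm_sq_le_apply_add_smul hL hg hLip η z
  rw [norm_smul, Real.norm_of_nonneg hη, ← mul_assoc, mul_comm (1 - L * η)]
  exact mul_le_sqrt_sub_sqrt hμ (sub_nonneg.2 (hmax _)) (mul_nonneg hη (by linarith))
    (norm_nonneg _) (by linarith) (hPL z)

lemma mul_norm_sub_le_sqrt_of_ascent (hμ : 0 < μ) (hL : 0 ≤ L)
    (hg : ∀ v, HasGradientAt f (g v) v) (hLip : ∀ u v, ‖g u - g v‖ ≤ L * ‖u - v‖)
    (hmax : ∀ w, f w ≤ f vs) (huniq : ∀ v, (∀ w, f w ≤ f v) → v = vs)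
    (hPL : ∀ v, μ * (f vs - f v) ≤ 1 / 2 * ‖g v‖ ^ 2)
    {η : ℝ} (hη : 0 < η) (hLη : L * η < 1) (v : E) :
    (1 - L * η) * ‖v - vs‖ ≤ √(2 * (f vs - f v) / μ) := by
  set T : E → E := fun z => z + η • g z
  have ht : 0 < 1 - L * η := by linarith
  obtain ⟨a, hlim, hdist⟩ := exists_tendsto_dist_le_of_dist_succ_le_sub
    (w := fun n => T^[n] v) (s := fun n => √(2 * (f vs - f (T^[n] v)) / μ) / (1 - L * η))
    (fun n => by positivity) fun n => by
      rw [Function.iterate_succ_apply', dist_comm, dist_eq_norm, ← sub_div, le_div_iff₀' ht]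
      simpa [T] using mul_norm_smul_le_sqrt_sub_sqrt hμ hL hg hLip hmax hPL hη.le hLη.le _
  have hg_cont : Continuous g :=
    (LipschitzWith.of_dist_le_mul (K := ⟨L, hL⟩) fun u w => by
      rw [dist_eq_norm, dist_eq_norm]; exact hLip u w).continuous
  have hfix : T a = a :=
    isFixedPt_of_tendsto_iterate hlim (continuous_id.add (hg_cont.const_smul η)).continuousAt
  have hga : g a = 0 := by simpa [T, hη.ne'] using hfix
  have hPLa := hPL a
  rw [hga, norm_zero] at hPLa
  obtain rfl : a = vs := huniq a fun w => (hmax w).trans (by nlinarith)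
  rwa [Function.iterate_zero_apply, dist_eq_norm, le_div_iff₀' ht] at hdist

lemma norm_sub_le_sqrt_of_PL (hμ : 0 < μ) (hL : 0 < L)
    (hg : ∀ v, HasGradientAt f (g v) v) (hLip : ∀ u v, ‖g u - g v‖ ≤ L * ‖u - v‖)
    (hmax : ∀ w, f w ≤ f vs) (huniq : ∀ v, (∀ w, f w ≤ f v) → v = vs)
    (hPL : ∀ v, μ * (f vs - f v) ≤ 1 / 2 * ‖g v‖ ^ 2) (v : E) :
    ‖v - vs‖ ≤ √(2 * (f vs - f v) / μ) := by
  have hbound : ∀ t ∈ Set.Ioo (0 : ℝ) 1, t * ‖v - vs‖ ≤ √(2 * (f vs - f v) / μ) := by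
    rintro t ⟨ht0, ht1⟩
    have h := mul_norm_sub_le_sqrt_of_ascent hμ hL.le hg hLip hmax huniq hPL
      (η := (1 - t) / L) (by positivity) (by rw [mul_div_cancel₀ _ hL.ne']; linarith) v
    rwa [mul_div_cancel₀ _ hL.ne', sub_sub_cancel] at h
  have hlim : Tendsto (fun t : ℝ => t * ‖v - vs‖) (𝓝[<] 1) (𝓝 ‖v - vs‖) := by
    simpa using ((continuous_mul_const ‖v - vs‖).tendsto 1).mono_left nhdsWithin_le_nhds
  exact le_of_tendsto hlim (Filter.mem_of_superset (Ioo_mem_nhdsLT zero_lt_one) hbound)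

lemma mul_norm_sub_le_norm_of_PL (hμ : 0 < μ) (hL : 0 < L)
    (hg : ∀ v, HasGradientAt f (g v) v) (hLip : ∀ u v, ‖g u - g v‖ ≤ L * ‖u - v‖)
    (hmax : ∀ w, f w ≤ f vs) (huniq : ∀ v, (∀ w, f w ≤ f v) → v = vs)
    (hPL : ∀ v, μ * (f vs - f v) ≤ 1 / 2 * ‖g v‖ ^ 2) (v : E) :
    μ * ‖v - vs‖ ≤ ‖g v‖ := by
  rw [← le_div_iff₀' hμ]
  refine (norm_sub_le_sqrt_of_PL hμ hL hg hLip hmax huniq hPL v).trans ?_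
  rw [Real.sqrt_le_left (by positivity), div_pow, div_le_div_iff₀ hμ (by positivity)]
  nlinarith [hPL v]

end Ascent

section ProximalObjective

variable {E : Type*} [NormedAddCommGroup E] [InnerProductSpace ℝ E]

lemma IsLocalMax.hasGradientAt_eq_zero [CompleteSpace E] {f : E → ℝ} {g a : E}
    (h : IsLocalMax f a) (hf : HasGradientAt f g a) : g = 0 :=
  (toDual ℝ E).map_eq_zero_iff.mp (h.hasFDerivAt_eq_zero hf.hasFDerivAt)

lemma HasGradientAt.sub_norm_sub_sq_div [CompleteSpace E] {f : E → ℝ} {g v : E}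
    (hf : HasGradientAt f g v) (x : E) (γ : ℝ) :
    HasGradientAt (fun v => f v - ‖v - x‖ ^ 2 / (2 * γ)) (g - γ⁻¹ • (v - x)) v := by
  rw [hasGradientAt_iff_hasFDerivAt] at hf ⊢
  have hsq : HasFDerivAt (fun v => ‖v - x‖ ^ 2 / (2 * γ)) _ v :=
    (hasFDerivAt_sub_const x).norm_sq.mul_const (2 * γ)⁻¹
  refine (hf.fun_sub hsq).congr_fderiv ?_
  ext w
  simp only [mul_inv_rev, map_sub, ContinuousLinearMap.comp_id, sub_apply,
    toDual_apply_apply, smul_apply, coe_innerSL_apply, nsmul_eq_mul,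
    Nat.cast_ofNat, smul_eq_mul, map_smul, sub_right_inj]
  ring

lemma norm_sub_smul_sub_sub_le {g : E → E} {L γ : ℝ} (hγ : 0 ≤ γ)
    (hLip : ∀ u v, ‖g u - g v‖ ≤ L * ‖u - v‖) (x u w : E) :
    ‖(g u - γ⁻¹ • (u - x)) - (g w - γ⁻¹ • (w - x))‖ ≤ (L + γ⁻¹) * ‖u - w‖ := calc
  _ = ‖(g u - g w) - γ⁻¹ • (u - w)‖ := by congr 1; simp only [smul_sub]; abel
  _ ≤ L * ‖u - w‖ + γ⁻¹ * ‖u - w‖ := by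
    refine (norm_sub_le _ _).trans (add_le_add (hLip u w) ?_)
    rw [norm_smul, Real.norm_of_nonneg (inv_nonneg.2 hγ)]
  _ = (L + γ⁻¹) * ‖u - w‖ := by ring

end ProximalObjective

lemma sqrt_integral_norm_sq_le_of_ae_norm_le {α F : Type*} [MeasurableSpace α]
    {P : Measure α} [IsProbabilityMeasure P] [NormedAddCommGroup F] {u : α → F} {C : ℝ}
    (hC : 0 ≤ C) (h : ∀ᵐ x ∂P, ‖u x‖ ≤ C) : √(∫ x, ‖u x‖ ^ 2 ∂P) ≤ C := by
  rw [Real.sqrt_le_left hC]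
  calc ∫ x, ‖u x‖ ^ 2 ∂P ≤ ∫ _, C ^ 2 ∂P :=
        integral_mono_of_nonneg (.of_forall fun _ => by positivity) (integrable_const _)
          (h.mono fun _ hx => pow_le_pow_left₀ (norm_nonneg _) hx 2)
    _ = C ^ 2 := by simp

theorem vstar_kappa_lipschitz_in_theta_general
    {d p : ℕ} (P : Measure (EuclideanSpace ℝ (Fin d))) [IsProbabilityMeasure P]
    (ℓ : EuclideanSpace ℝ (Fin p) → EuclideanSpace ℝ (Fin d) → ℝ)
    (gθ : EuclideanSpace ℝ (Fin p) → EuclideanSpace ℝ (Fin d) → EuclideanSpace ℝ (Fin p))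
    (gv : EuclideanSpace ℝ (Fin p) → EuclideanSpace ℝ (Fin d) → EuclideanSpace ℝ (Fin d))
    (l₀ γ μ : ℝ) (hl₀ : 0 ≤ l₀) (hγ : 0 < γ) (hμ : 0 < μ)
    (hgv : ∀ θ v, HasGradientAt (fun v' => ℓ θ v') (gv θ v) v)
    (hsmooth : ∀ θ v θ' v',
      Real.sqrt (‖gθ θ' v' - gθ θ v‖ ^ 2 + ‖gv θ' v' - gv θ v‖ ^ 2)
        ≤ l₀ * Real.sqrt (‖θ' - θ‖ ^ 2 + ‖v' - v‖ ^ 2))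
    (vstar : EuclideanSpace ℝ (Fin p) → EuclideanSpace ℝ (Fin d) → EuclideanSpace ℝ (Fin d))
    (hmax : ∀ θ, ∀ᵐ x ∂P, ∀ v,
      ℓ θ v - ‖v - x‖ ^ 2 / (2 * γ) ≤ ℓ θ (vstar θ x) - ‖vstar θ x - x‖ ^ 2 / (2 * γ))
    (huniq : ∀ θ, ∀ᵐ x ∂P, ∀ v,
      (∀ w, ℓ θ w - ‖w - x‖ ^ 2 / (2 * γ) ≤ ℓ θ v - ‖v - x‖ ^ 2 / (2 * γ)) → v = vstar θ x)
    (hPL : ∀ θ, ∀ᵐ x ∂P, ∀ v,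
      μ * ((ℓ θ (vstar θ x) - ‖vstar θ x - x‖ ^ 2 / (2 * γ)) - (ℓ θ v - ‖v - x‖ ^ 2 / (2 * γ)))
        ≤ (1 / 2) * ‖gv θ v - γ⁻¹ • (v - x)‖ ^ 2) :
    ∀ θ θ' : EuclideanSpace ℝ (Fin p),
      Real.sqrt (∫ x, ‖vstar θ' x - vstar θ x‖ ^ 2 ∂P)
        ≤ ((l₀ + γ⁻¹) / μ) * ‖θ' - θ‖ := by
  intro θ θ'
  have hgv_lip_v : ∀ θ u w, ‖gv θ u - gv θ w‖ ≤ l₀ * ‖u - w‖ := fun θ u w => by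
    refine (Real.le_sqrt_of_sq_le (le_add_of_nonneg_left (sq_nonneg ‖gθ θ u - gθ θ w‖))).trans ?_
    simpa [Real.sqrt_sq (norm_nonneg _)] using hsmooth θ w θ u
  have hgv_lip_θ : ∀ v, ‖gv θ' v - gv θ v‖ ≤ l₀ * ‖θ' - θ‖ := fun v => by
    refine (Real.le_sqrt_of_sq_le (le_add_of_nonneg_left (sq_nonneg ‖gθ θ' v - gθ θ v‖))).trans ?_
    simpa [Real.sqrt_sq (norm_nonneg _)] using hsmooth θ v θ' v
  refine (sqrt_integral_norm_sq_le_of_ae_norm_le (C := l₀ / μ * ‖θ' - θ‖) (by positivity) ?_).trans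
    (by gcongr; linarith [inv_pos.2 hγ])
  filter_upwards [hmax θ, hmax θ', huniq θ', hPL θ'] with x hmaxθ hmaxθ' huniqθ' hPLθ'
  have hgrad : ∀ θ v, HasGradientAt (fun v => ℓ θ v - ‖v - x‖ ^ 2 / (2 * γ))
      (gv θ v - γ⁻¹ • (v - x)) v := fun θ v => (hgv θ v).sub_norm_sub_sq_div x γ
  have hcrit : gv θ (vstar θ x) = γ⁻¹ • (vstar θ x - x) :=
    sub_eq_zero.1 (IsLocalMax.hasGradientAt_eq_zero (.of_forall hmaxθ) (hgrad θ _))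
  have hEB := mul_norm_sub_le_norm_of_PL hμ (by positivity) (hgrad θ')
    (norm_sub_smul_sub_sub_le hγ.le (hgv_lip_v θ') x) hmaxθ' huniqθ' hPLθ' (vstar θ x)
  rw [← hcrit, norm_sub_rev] at hEB
  rw [div_mul_eq_mul_div, le_div_iff₀' hμ]
  exact hEB.trans (hgv_lip_θ _)

/-- Under the μ-PL-in-T assumption, `θ ↦ T*(θ)` is κ-Lipschitz from
`ℝ^p` to `L²(P)` with `κ = l/μ` and `l = l₀ + 1/γ`. -/
theorem vstar_kappa_lipschitz_in_theta
    {d p : ℕ} (P : Measure (EuclideanSpace ℝ (Fin d))) [IsProbabilityMeasure P]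
    (hP2 : Integrable (fun x => ‖x‖ ^ 2) P)
    (ℓ : EuclideanSpace ℝ (Fin p) → EuclideanSpace ℝ (Fin d) → ℝ)
    (gθ : EuclideanSpace ℝ (Fin p) → EuclideanSpace ℝ (Fin d) → EuclideanSpace ℝ (Fin p))
    (gv : EuclideanSpace ℝ (Fin p) → EuclideanSpace ℝ (Fin d) → EuclideanSpace ℝ (Fin d))
    (l₀ γ μ : ℝ) (hl₀ : 0 ≤ l₀) (hγ : 0 < γ) (hμ : 0 < μ)
    (hgθ : ∀ θ v, HasGradientAt (fun θ' => ℓ θ' v) (gθ θ v) θ)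
    (hgv : ∀ θ v, HasGradientAt (fun v' => ℓ θ v') (gv θ v) v)
    (hsmooth : ∀ θ v θ' v',
      Real.sqrt (‖gθ θ' v' - gθ θ v‖ ^ 2 + ‖gv θ' v' - gv θ v‖ ^ 2)
        ≤ l₀ * Real.sqrt (‖θ' - θ‖ ^ 2 + ‖v' - v‖ ^ 2))
    (vstar : EuclideanSpace ℝ (Fin p) → EuclideanSpace ℝ (Fin d) → EuclideanSpace ℝ (Fin d))
    (hmax : ∀ θ, ∀ᵐ x ∂P, ∀ v,
      ℓ θ v - ‖v - x‖ ^ 2 / (2 * γ) ≤ ℓ θ (vstar θ x) - ‖vstar θ x - x‖ ^ 2 / (2 * γ))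
    (huniq : ∀ θ, ∀ᵐ x ∂P, ∀ v,
      (∀ w, ℓ θ w - ‖w - x‖ ^ 2 / (2 * γ) ≤ ℓ θ v - ‖v - x‖ ^ 2 / (2 * γ)) → v = vstar θ x)
    (hPL : ∀ θ, ∀ᵐ x ∂P, ∀ v,
      μ * ((ℓ θ (vstar θ x) - ‖vstar θ x - x‖ ^ 2 / (2 * γ)) - (ℓ θ v - ‖v - x‖ ^ 2 / (2 * γ)))
        ≤ (1 / 2) * ‖gv θ v - γ⁻¹ • (v - x)‖ ^ 2)
    (hvstar : ∀ θ, MemLp (vstar θ) 2 P) :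
    ∀ θ θ' : EuclideanSpace ℝ (Fin p),
      Real.sqrt (∫ x, ‖vstar θ' x - vstar θ x‖ ^ 2 ∂P)
        ≤ ((l₀ + γ⁻¹) / μ) * ‖θ' - θ‖ :=
  vstar_kappa_lipschitz_in_theta_general P ℓ gθ gv l₀ γ μ hl₀ hγ hμ hgv hsmooth vstar hmax huniq hPL
end

section
/- (Primal descent of one GDA step.) Suppose the step sizes satisfy l·η ≤ 1 and l·τ ≤ 1/2. If (θ', T') is obtained from (θ,T) by one GDA step θ' = θ − τ ∂_θL(θ,T), T' = T + η ∂_TL(θ,T), then L(θ',T') − L(θ,T) ≥ (η/4)‖∂_TL(θ,T)‖²_{L²(P)} − (7τ/4)‖∂_θL(θ,T)‖². -/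
/-!
For fixed `x`, every slice of the integrand `ℓ θ v - ‖v - x‖ ^ 2 / (2 γ)` has an `l`-Lipschitz
gradient, so the two-sided descent lemma `|f b - f a - ⟪∇f a, b - a⟫| ≤ (l / 2) ‖b - a‖ ^ 2`
applies to the `v`-step at the old `θ` and then to the `θ`-step at the new `v`. Moving the
`θ`-gradient from `v` to `v + Δv` costs `l₀ ‖Δv‖ ‖Δθ‖ ≤ (l₀ / 4) ‖Δv‖ ^ 2 + l₀ ‖Δθ‖ ^ 2`, so
pointwise the step gains at least `η ‖∂_TL‖ ^ 2 - τ ⟪∂_θℓ, ∂_θL⟫` up to the errors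
`(3l / 4) η ^ 2 ‖∂_TL‖ ^ 2 + (3l / 2) τ ^ 2 ‖∂_θL‖ ^ 2`. Integrating against `P` turns the
inner product into `‖∂_θL‖ ^ 2`, and `l η ≤ 1`, `l τ ≤ 1 / 2` give the constants `1 / 4` and
`7 / 4`.
-/

open MeasureTheory
open scoped NNReal ENNReal RealInnerProductSpace

theorem lipschitzWith_slices_of_sqrt_bound {Θ E Θ' E' : Type*} [SeminormedAddCommGroup Θ]
    [SeminormedAddCommGroup E] [SeminormedAddCommGroup Θ'] [SeminormedAddCommGroup E']
    {a : Θ → E → Θ'} {b : Θ → E → E'} {K : ℝ≥0}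
    (h : ∀ θ v θ' v', √(‖a θ' v' - a θ v‖ ^ 2 + ‖b θ' v' - b θ v‖ ^ 2)
      ≤ K * √(‖θ' - θ‖ ^ 2 + ‖v' - v‖ ^ 2)) :
    (∀ v, LipschitzWith K (a · v)) ∧ (∀ θ, LipschitzWith K (a θ)) ∧
      (∀ θ, LipschitzWith K (b θ)) := by
  have left : ∀ s t : ℝ, s ≤ √(s ^ 2 + t ^ 2) :=
    fun s t => Real.le_sqrt_of_sq_le (le_add_of_nonneg_right (sq_nonneg t))
  have right : ∀ s t : ℝ, t ≤ √(s ^ 2 + t ^ 2) :=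
    fun s t => Real.le_sqrt_of_sq_le (le_add_of_nonneg_left (sq_nonneg s))
  refine ⟨fun v => lipschitzWith_iff_norm_sub_le.2 fun θ' θ => ?_,
    fun θ => lipschitzWith_iff_norm_sub_le.2 fun v' v => ?_,
    fun θ => lipschitzWith_iff_norm_sub_le.2 fun v' v => ?_⟩
  · simpa using (left _ _).trans (h θ v θ' v)
  · simpa using (left _ _).trans (h θ v θ v')
  · simpa using (right _ _).trans (h θ v θ v')

theorem LipschitzWith.sub_smul_sub_const {E : Type*} [NormedAddCommGroup E] [NormedSpace ℝ E]
    {g : E → E} {K : ℝ≥0} (hg : LipschitzWith K g) (c : ℝ) (x : E) :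
    LipschitzWith (K + ‖c‖₊) (fun w => g w - c • (w - x)) := by
  simpa using
    hg.sub ((lipschitzWith_smul c).comp (LipschitzWith.id.sub (LipschitzWith.const x)))

section Gradient

variable {E : Type*} [NormedAddCommGroup E] [InnerProductSpace ℝ E] [CompleteSpace E]

theorem abs_sub_sub_inner_le_of_lipschitzWith_gradient {f : E → ℝ} {g : E → E} {K : ℝ≥0}
    (hf : ∀ y, HasGradientAt f (g y) y) (hg : LipschitzWith K g) (a b : E) :
    |f b - f a - ⟪g a, b - a⟫| ≤ K / 2 * ‖b - a‖ ^ 2 := by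
  set φ : ℝ → ℝ := fun t => f (a + t • (b - a)) - f a - t * ⟪g a, b - a⟫
  have hφ : ∀ t, HasDerivAt φ ⟪g (a + t • (b - a)) - g a, b - a⟫ t := by
    intro t
    have hpath : HasDerivAt (fun s : ℝ => a + s • (b - a)) (b - a) t := by
      simpa using ((hasDerivAt_id t).smul_const (b - a)).const_add a
    exact ((((hf _).hasFDerivAt.comp_hasDerivAt t hpath).sub_const (f a)).sub
      ((hasDerivAt_id t).mul_const ⟪g a, b - a⟫)).congr_deriv
        (by simp [InnerProductSpace.toDual_apply_apply, inner_sub_left])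
  have hB : ∀ t, HasDerivAt (fun s : ℝ => K / 2 * ‖b - a‖ ^ 2 * s ^ 2)
      (K * ‖b - a‖ ^ 2 * t) t := fun t =>
    ((hasDerivAt_pow 2 t).const_mul _).congr_deriv
      (by simp only [Nat.cast_ofNat, Nat.add_one_sub_one, pow_one]; ring)
  have bound : ∀ t ∈ Set.Ico (0 : ℝ) 1,
      ‖⟪g (a + t • (b - a)) - g a, b - a⟫‖ ≤ K * ‖b - a‖ ^ 2 * t := by
    intro t ht
    calc ‖⟪g (a + t • (b - a)) - g a, b - a⟫‖ ≤ ‖g (a + t • (b - a)) - g a‖ * ‖b - a‖ :=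
          norm_inner_le_norm _ _
      _ ≤ K * ‖t • (b - a)‖ * ‖b - a‖ := by
          gcongr; simpa using hg.norm_sub_le (a + t • (b - a)) a
      _ = K * ‖b - a‖ ^ 2 * t := by
          rw [norm_smul, Real.norm_of_nonneg ht.1]; ring
  have := image_norm_le_of_norm_deriv_right_le_deriv_boundary
    (fun t _ => (hφ t).continuousAt.continuousWithinAt) (fun t _ => (hφ t).hasDerivWithinAt)
    (by simp [φ]) hB bound (Set.right_mem_Icc.2 zero_le_one)
  simpa [φ] using this

theorem HasGradientAt.sub {f g : E → ℝ} {f' g' x : E} (hf : HasGradientAt f f' x)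
    (hg : HasGradientAt g g' x) : HasGradientAt (fun y => f y - g y) (f' - g') x := by
  rw [hasGradientAt_iff_hasFDerivAt, map_sub]
  exact hf.hasFDerivAt.sub hg.hasFDerivAt

theorem hasGradientAt_norm_sub_sq_div (x v : E) (γ : ℝ) :
    HasGradientAt (fun w => ‖w - x‖ ^ 2 / (2 * γ)) (γ⁻¹ • (v - x)) v := by
  have h := ((hasFDerivAt_id v).sub_const x).norm_sq.mul_const (2 * γ)⁻¹
  simp only [id, ← div_eq_mul_inv] at h
  rw [hasGradientAt_iff_hasFDerivAt]
  refine h.congr_fderiv ?_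
  ext w
  simp only [map_sub, ContinuousLinearMap.comp_id, smul_apply,
    sub_apply, coe_innerSL_apply, nsmul_eq_mul, smul_eq_mul, map_smul,
    InnerProductSpace.toDual_apply_apply]
  ring

end Gradient

section Integrability

variable {α : Type*} [MeasurableSpace α] {μ : Measure α} [IsFiniteMeasure μ]

theorem LipschitzWith.comp_memLp_of_isFiniteMeasure {E F : Type*} [NormedAddCommGroup E]
    [NormedAddCommGroup F] {g : E → F} {K : ℝ≥0} (hg : LipschitzWith K g) {S : α → E}
    {p : ℝ≥0∞} (hS : MemLp S p μ) : MemLp (fun x => g (S x)) p μ := by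
  have hg₀ : LipschitzWith (K + 0) fun y => g y - g 0 := hg.sub (LipschitzWith.const _)
  convert (hg₀.comp_memLp (sub_self _) hS).add (memLp_const (g 0)) using 1
  ext x
  simp

theorem integrable_comp_of_lipschitzWith_gradient {E : Type*} [NormedAddCommGroup E]
    [InnerProductSpace ℝ E] [CompleteSpace E] {f : E → ℝ} {g : E → E} {K : ℝ≥0}
    (hf : ∀ y, HasGradientAt f (g y) y) (hg : LipschitzWith K g) {S : α → E}
    (hS : MemLp S 2 μ) : Integrable (fun x => f (S x)) μ := by
  have growth : ∀ y, ‖f y‖ ≤ |f 0| + ‖g 0‖ * ‖y‖ + K / 2 * ‖y‖ ^ 2 := by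
    intro y
    obtain ⟨h₁, h₂⟩ := abs_le.1 (abs_sub_sub_inner_le_of_lipschitzWith_gradient hf hg 0 y)
    obtain ⟨hi₁, hi₂⟩ := abs_le.1 (abs_real_inner_le_norm (g 0) y)
    rw [sub_zero] at h₁ h₂
    rw [Real.norm_eq_abs, abs_le]
    constructor <;> linarith [neg_abs_le (f 0), le_abs_self (f 0)]
  have hf_cont : Continuous f :=
    continuous_iff_continuousAt.2 fun y => (hf y).differentiableAt.continuousAt
  refine Integrable.mono' ?_ (hf_cont.comp_aestronglyMeasurable hS.aestronglyMeasurable)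
    (Filter.Eventually.of_forall fun x => growth (S x))
  exact ((integrable_const _).add ((hS.integrable one_le_two).norm.const_mul _)).add
    (hS.norm.integrable_sq.const_mul _)

end Integrability

section TwoBlock

variable {Θ E : Type*} [NormedAddCommGroup Θ] [InnerProductSpace ℝ Θ] [CompleteSpace Θ]
  [NormedAddCommGroup E] [InnerProductSpace ℝ E] [CompleteSpace E]
  {F : Θ → E → ℝ} {Fθ : Θ → E → Θ} {Fv : Θ → E → E} {L : ℝ≥0}

theorem le_apply_add_add_of_lipschitzWith_partialGradients
    (hFθ : ∀ θ v, HasGradientAt (F · v) (Fθ θ v) θ)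
    (hFv : ∀ θ v, HasGradientAt (F θ ·) (Fv θ v) v)
    (hθθ : ∀ v, LipschitzWith L (Fθ · v)) (hθv : ∀ θ, LipschitzWith L (Fθ θ))
    (hvv : ∀ θ, LipschitzWith L (Fv θ)) (θ : Θ) (v : E) (Δθ : Θ) (Δv : E) :
    F θ v + ⟪Fθ θ v, Δθ⟫ + ⟪Fv θ v, Δv⟫ - 3 * L / 4 * ‖Δv‖ ^ 2 - 3 * L / 2 * ‖Δθ‖ ^ 2
      ≤ F (θ + Δθ) (v + Δv) := by
  have descent_v := (abs_le.1 (abs_sub_sub_inner_le_of_lipschitzWith_gradient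
    (hFv θ) (hvv θ) v (v + Δv))).1
  have descent_θ := (abs_le.1 (abs_sub_sub_inner_le_of_lipschitzWith_gradient
    (fun θ => hFθ θ (v + Δv)) (hθθ (v + Δv)) θ (θ + Δθ))).1
  simp only [add_sub_cancel_left] at descent_v descent_θ
  have cross : ⟪Fθ θ v, Δθ⟫ - L * ‖Δv‖ * ‖Δθ‖ ≤ ⟪Fθ θ (v + Δv), Δθ⟫ := by
    have hlip : ‖Fθ θ v - Fθ θ (v + Δv)‖ ≤ L * ‖Δv‖ := by
      simpa using (hθv θ).norm_sub_le v (v + Δv)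
    have := (real_inner_le_norm _ Δθ).trans (mul_le_mul_of_nonneg_right hlip (norm_nonneg Δθ))
    rw [inner_sub_left] at this
    linarith
  have amgm : (L : ℝ) * ‖Δv‖ * ‖Δθ‖ ≤ L / 4 * ‖Δv‖ ^ 2 + L * ‖Δθ‖ ^ 2 := by
    nlinarith [mul_nonneg L.coe_nonneg (sq_nonneg (‖Δv‖ / 2 - ‖Δθ‖))]
  linarith

end TwoBlock

section GDAStep

variable {α Θ E : Type*} [MeasurableSpace α] {μ : Measure α} [IsProbabilityMeasure μ]
  [NormedAddCommGroup Θ] [InnerProductSpace ℝ Θ] [CompleteSpace Θ]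
  [NormedAddCommGroup E] [InnerProductSpace ℝ E] [CompleteSpace E]
  {F : α → Θ → E → ℝ} {Fθ : α → Θ → E → Θ} {Fv : α → Θ → E → E} {L : ℝ≥0}

theorem le_integral_gdaStep_sub_integral
    (hFθ : ∀ x θ v, HasGradientAt (F x · v) (Fθ x θ v) θ)
    (hFv : ∀ x θ v, HasGradientAt (F x θ ·) (Fv x θ v) v)
    (hθθ : ∀ x v, LipschitzWith L (Fθ x · v)) (hθv : ∀ x θ, LipschitzWith L (Fθ x θ))
    (hvv : ∀ x θ, LipschitzWith L (Fv x θ)) (θ : Θ) (T : α → E) (τ η : ℝ)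
    (hF : Integrable (fun x => F x θ (T x)) μ)
    (hF' : Integrable (fun x =>
      F x (θ - τ • ∫ y, Fθ y θ (T y) ∂μ) (T x + η • Fv x θ (T x))) μ)
    (hFθ_int : Integrable (fun x => Fθ x θ (T x)) μ)
    (hFv_sq : Integrable (fun x => ‖Fv x θ (T x)‖ ^ 2) μ) :
    (η - 3 * L / 4 * η ^ 2) * ∫ x, ‖Fv x θ (T x)‖ ^ 2 ∂μ
        - (τ + 3 * L / 2 * τ ^ 2) * ‖∫ x, Fθ x θ (T x) ∂μ‖ ^ 2
      ≤ ∫ x, F x (θ - τ • ∫ y, Fθ y θ (T y) ∂μ) (T x + η • Fv x θ (T x)) ∂μ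
        - ∫ x, F x θ (T x) ∂μ := by
  set G := ∫ x, Fθ x θ (T x) ∂μ
  have pointwise : ∀ x, -τ * ⟪G, Fθ x θ (T x)⟫
      + (η - 3 * L / 4 * η ^ 2) * ‖Fv x θ (T x)‖ ^ 2 - 3 * L / 2 * τ ^ 2 * ‖G‖ ^ 2
      ≤ F x (θ - τ • G) (T x + η • Fv x θ (T x)) - F x θ (T x) := by
    intro x
    have h := le_apply_add_add_of_lipschitzWith_partialGradients (hFθ x) (hFv x) (hθθ x)
      (hθv x) (hvv x) θ (T x) (-(τ • G)) (η • Fv x θ (T x))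
    rw [← sub_eq_add_neg, inner_neg_right, real_inner_smul_right, real_inner_smul_right,
      real_inner_self_eq_norm_sq, norm_neg, norm_smul, norm_smul, mul_pow, mul_pow,
      Real.norm_eq_abs, Real.norm_eq_abs, sq_abs, sq_abs, real_inner_comm] at h
    linarith
  have h_inner := (hFθ_int.const_inner G).const_mul (-τ)
  have h_sq := hFv_sq.const_mul (η - 3 * L / 4 * η ^ 2)
  have h_sum : Integrable (fun x => -τ * ⟪G, Fθ x θ (T x)⟫
      + (η - 3 * L / 4 * η ^ 2) * ‖Fv x θ (T x)‖ ^ 2) μ := h_inner.add h_sq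
  calc _ = ∫ x, (-τ * ⟪G, Fθ x θ (T x)⟫
      + (η - 3 * L / 4 * η ^ 2) * ‖Fv x θ (T x)‖ ^ 2 - 3 * L / 2 * τ ^ 2 * ‖G‖ ^ 2) ∂μ := by
        rw [integral_sub h_sum (integrable_const _), integral_add h_inner h_sq,
          integral_const_mul, integral_const_mul, integral_inner hFθ_int,
          real_inner_self_eq_norm_sq, integral_const, probReal_univ, one_smul]
        ring
    _ ≤ ∫ x, (F x (θ - τ • G) (T x + η • Fv x θ (T x)) - F x θ (T x)) ∂μ :=
        integral_mono (h_sum.sub (integrable_const _)) (hF'.sub hF) pointwise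
    _ = _ := integral_sub hF' hF

end GDAStep

/-- (Primal descent of one GDA step.) If `l·η ≤ 1` and `l·τ ≤ 1/2`
with `l = l₀ + 1/γ`, and `(θ', T')` is obtained from `(θ,T)` by one GDA step
`θ' = θ − τ ∂_θL(θ,T)`, `T' = T + η ∂_TL(θ,T)`, then
`L(θ',T') − L(θ,T) ≥ (η/4)‖∂_TL(θ,T)‖²_{L²(P)} − (7τ/4)‖∂_θL(θ,T)‖²`. -/
theorem primal_descent_one_gda_step
    {d p : ℕ} (P : Measure (EuclideanSpace ℝ (Fin d))) [IsProbabilityMeasure P]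
    (hP2 : Integrable (fun x => ‖x‖ ^ 2) P)
    (ℓ : EuclideanSpace ℝ (Fin p) → EuclideanSpace ℝ (Fin d) → ℝ)
    (gθ : EuclideanSpace ℝ (Fin p) → EuclideanSpace ℝ (Fin d) → EuclideanSpace ℝ (Fin p))
    (gv : EuclideanSpace ℝ (Fin p) → EuclideanSpace ℝ (Fin d) → EuclideanSpace ℝ (Fin d))
    (l₀ γ : ℝ) (hl₀ : 0 ≤ l₀) (hγ : 0 < γ)
    (hgθ : ∀ θ v, HasGradientAt (fun θ' => ℓ θ' v) (gθ θ v) θ)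
    (hgv : ∀ θ v, HasGradientAt (fun v' => ℓ θ v') (gv θ v) v)
    (hsmooth : ∀ θ v θ' v',
      Real.sqrt (‖gθ θ' v' - gθ θ v‖ ^ 2 + ‖gv θ' v' - gv θ v‖ ^ 2)
        ≤ l₀ * Real.sqrt (‖θ' - θ‖ ^ 2 + ‖v' - v‖ ^ 2))
    (η τ : ℝ) (hηpos : 0 < η) (hτpos : 0 < τ)
    (hη : (l₀ + γ⁻¹) * η ≤ 1) (hτ : (l₀ + γ⁻¹) * τ ≤ 1 / 2)
    (θ : EuclideanSpace ℝ (Fin p))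
    (T : EuclideanSpace ℝ (Fin d) → EuclideanSpace ℝ (Fin d)) (hT : MemLp T 2 P)
    (θ' : EuclideanSpace ℝ (Fin p)) (hθ' : θ' = θ - τ • (∫ x, gθ θ (T x) ∂P))
    (T' : EuclideanSpace ℝ (Fin d) → EuclideanSpace ℝ (Fin d))
    (hT'def : T' = fun x => T x + η • (gv θ (T x) - γ⁻¹ • (T x - x))) :
    (η / 4) * (∫ x, ‖gv θ (T x) - γ⁻¹ • (T x - x)‖ ^ 2 ∂P)
        - (7 * τ / 4) * ‖∫ x, gθ θ (T x) ∂P‖ ^ 2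
      ≤ (∫ x, (ℓ θ' (T' x) - ‖T' x - x‖ ^ 2 / (2 * γ)) ∂P)
        - ∫ x, (ℓ θ (T x) - ‖T x - x‖ ^ 2 / (2 * γ)) ∂P := by
  obtain ⟨hθθ, hθv, hvv⟩ := lipschitzWith_slices_of_sqrt_bound (K := ⟨l₀, hl₀⟩) hsmooth
  set L : ℝ≥0 := ⟨l₀, hl₀⟩ + ‖γ⁻¹‖₊
  have hL : (L : ℝ) = l₀ + γ⁻¹ := by
    change l₀ + ‖γ⁻¹‖ = l₀ + γ⁻¹
    rw [Real.norm_of_nonneg (inv_nonneg.2 hγ.le)]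
  have h_id : MemLp (fun x => x) 2 P :=
    (memLp_two_iff_integrable_sq_norm aestronglyMeasurable_id).2 hP2
  have h_lagr : ∀ θ S, MemLp S 2 P →
      Integrable (fun x => ℓ θ (S x) - ‖S x - x‖ ^ 2 / (2 * γ)) P := fun θ S hS =>
    (integrable_comp_of_lipschitzWith_gradient (hgv θ) (hvv θ) hS).sub
      ((hS.sub h_id).norm.integrable_sq.div_const _)
  have hD : MemLp (fun x => gv θ (T x) - γ⁻¹ • (T x - x)) 2 P :=
    ((hvv θ).comp_memLp_of_isFiniteMeasure hT).sub ((hT.sub h_id).const_smul γ⁻¹)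
  have step := le_integral_gdaStep_sub_integral (μ := P) (L := L)
    (F := fun x θ v => ℓ θ v - ‖v - x‖ ^ 2 / (2 * γ))
    (fun x θ v => by
      simpa using (hgθ θ v).sub (hasGradientAt_const θ (‖v - x‖ ^ 2 / (2 * γ))))
    (fun x θ v => (hgv θ v).sub (hasGradientAt_norm_sub_sq_div x v γ))
    (fun x v => (hθθ v).weaken le_self_add) (fun x θ => (hθv θ).weaken le_self_add)
    (fun x θ => (hvv θ).sub_smul_sub_const γ⁻¹ x) θ T τ η (h_lagr θ T hT)
    (h_lagr _ _ (hT.add (hD.const_smul η)))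
    (((hθv θ).comp_memLp_of_isFiniteMeasure hT).integrable one_le_two) hD.norm.integrable_sq
  subst hθ' hT'def
  rw [hL] at step
  have hD_sq : 0 ≤ ∫ x, ‖gv θ (T x) - γ⁻¹ • (T x - x)‖ ^ 2 ∂P :=
    integral_nonneg fun x => by positivity
  nlinarith [mul_nonneg (mul_nonneg hηpos.le (sub_nonneg.2 hη)) hD_sq,
    mul_nonneg (mul_nonneg hτpos.le (sub_nonneg.2 hτ)) (sq_nonneg ‖∫ x, gθ θ (T x) ∂P‖)]
end

section
/- Let ℋ be a real Hilbert space and M : ℋ × ℝ^p → ℝ be differentiable with coordinate l-Lipschitz partial gradients, let 𝒯 ⊆ ℋ (not assumed convex) and μ ∈ (0,l] be such that θ ↦ M(T,θ) is μ-strongly concave for every T ∈ 𝒯, with unique maximizer θ*[T], and set Ψ(T) := max_{θ∈ℝ^p} M(T,θ) = M(T,θ*[T]) and κ = l/μ. Then for all T, T̃ ∈ 𝒯, Ψ(T̃) − Ψ(T) ≤ ⟨∂_TM(T,θ*[T]), T̃ − T⟩ + (L₂/2)‖T̃ − T‖², where L₂ = l(1+κ²). -/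
/-!
Write `θ = θ*[T]` and `θ' = θ*[T̃]`. Because `∂_T M(·, θ')` is `l`-Lipschitz,
`M(T̃, θ') ≤ M(T, θ') + ⟪∂_T M(T, θ'), T̃ - T⟫ + (l/2)‖T̃ - T‖²`, and strong concavity at the
maximiser gives `M(T, θ') ≤ M(T, θ) - (μ/2)‖θ' - θ‖²`. Replacing `∂_T M(T, θ')` by `∂_T M(T, θ)`
costs `l‖θ' - θ‖‖T̃ - T‖`, which Young's inequality absorbs into the concavity margin at the price
`(l²/2μ)‖T̃ - T‖² ≤ (lκ²/2)‖T̃ - T‖²`.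
-/

open Set Filter Topology
open scoped RealInnerProductSpace

theorem norm_sub_sub_fderiv_le_of_lipschitz_fderiv
    {E F : Type*} [NormedAddCommGroup E] [NormedSpace ℝ E] [NormedAddCommGroup F]
    [NormedSpace ℝ F] {f : E → F} {f' : E → E →L[ℝ] F} {l : ℝ}
    (hf : ∀ x, HasFDerivAt f (f' x) x) (hf' : ∀ x y, ‖f' y - f' x‖ ≤ l * ‖y - x‖) (x y : E) :
    ‖f y - f x - f' x (y - x)‖ ≤ l / 2 * ‖y - x‖ ^ 2 := by
  set v := y - x
  let φ : ℝ → F := fun t => f (x + t • v) - f x - t • f' x v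
  have hφ : ∀ t, HasDerivAt φ (f' (x + t • v) v - f' x v) t := by
    intro t
    have hline : HasDerivAt (fun t : ℝ => x + t • v) v t := by
      simpa using ((hasDerivAt_id t).smul_const v).const_add x
    exact (((hf _).comp_hasDerivAt t hline).sub_const (f x)).sub
      (by simpa using (hasDerivAt_id t).smul_const (f' x v))
  have hB : ∀ t, HasDerivAt (fun t : ℝ => l / 2 * t ^ 2 * ‖v‖ ^ 2) (l * t * ‖v‖ ^ 2) t :=
    fun t => (((hasDerivAt_pow 2 t).const_mul (l / 2)).mul_const (‖v‖ ^ 2)).congr_deriv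
      (by push_cast; ring)
  have hbound : ∀ t ∈ Ico (0 : ℝ) 1, ‖f' (x + t • v) v - f' x v‖ ≤ l * t * ‖v‖ ^ 2 := by
    rintro t ⟨ht, -⟩
    calc ‖f' (x + t • v) v - f' x v‖ = ‖(f' (x + t • v) - f' x) v‖ := rfl
      _ ≤ ‖f' (x + t • v) - f' x‖ * ‖v‖ := ContinuousLinearMap.le_opNorm _ _
      _ ≤ l * ‖t • v‖ * ‖v‖ := by
          gcongr
          simpa using hf' x (x + t • v)
      _ = l * t * ‖v‖ ^ 2 := by rw [norm_smul, Real.norm_of_nonneg ht]; ring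
  have := image_norm_le_of_norm_deriv_right_le_deriv_boundary
    (fun t _ => (hφ t).continuousAt.continuousWithinAt) (fun t _ => (hφ t).hasDerivWithinAt)
    (by simp [φ]) hB hbound (right_mem_Icc.2 zero_le_one)
  simpa [φ, v] using this

theorem le_add_inner_add_of_lipschitz_gradient
    {H : Type*} [NormedAddCommGroup H] [InnerProductSpace ℝ H] [CompleteSpace H]
    {f : H → ℝ} {g : H → H} {l : ℝ}
    (hf : ∀ x, HasGradientAt f (g x) x) (hg : ∀ x y, ‖g y - g x‖ ≤ l * ‖y - x‖) (x y : H) :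
    f y ≤ f x + ⟪g x, y - x⟫ + l / 2 * ‖y - x‖ ^ 2 := by
  have h := norm_sub_sub_fderiv_le_of_lipschitz_fderiv (fun x => (hf x).hasFDerivAt)
    (fun x y => by rw [← map_sub, LinearIsometryEquiv.norm_map]; exact hg x y) x y
  rw [InnerProductSpace.toDual_apply_apply, Real.norm_eq_abs] at h
  linarith [le_abs_self (f y - f x - ⟪g x, y - x⟫)]

theorem StrongConcaveOn.le_sub_of_isMaxOn {E : Type*} [NormedAddCommGroup E] [NormedSpace ℝ E]
    {s : Set E} {m : ℝ} {f : E → ℝ} {x y : E} (hf : StrongConcaveOn s m f) (hx : x ∈ s)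
    (hy : y ∈ s) (hmax : IsMaxOn f s x) :
    f y ≤ f x - m / 2 * ‖y - x‖ ^ 2 := by
  have hchord : ∀ b ∈ Ioo (0 : ℝ) 1, f y - f x ≤ -((1 - b) * (m / 2 * ‖y - x‖ ^ 2)) := by
    rintro b ⟨hb0, hb1⟩
    have hconc := hf.2 hx hy (sub_nonneg.2 hb1.le) hb0.le (sub_add_cancel 1 b)
    have hle := hmax (hf.1 hx hy (sub_nonneg.2 hb1.le) hb0.le (sub_add_cancel 1 b))
    rw [norm_sub_rev] at hconc
    simp only [smul_eq_mul, mem_ofPred_eq] at hconc hle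
    have : b * (f y - f x + (1 - b) * (m / 2 * ‖y - x‖ ^ 2)) ≤ 0 := by nlinarith
    linarith [nonpos_of_mul_nonpos_right this hb0]
  have hlim : Tendsto (fun b : ℝ => -((1 - b) * (m / 2 * ‖y - x‖ ^ 2))) (𝓝[>] 0)
      (𝓝 (-(m / 2 * ‖y - x‖ ^ 2))) := by
    have : Continuous (fun b : ℝ => -((1 - b) * (m / 2 * ‖y - x‖ ^ 2))) := by fun_prop
    simpa using (this.tendsto 0).mono_left nhdsWithin_le_nhds
  linarith [ge_of_tendsto hlim (mem_of_superset (Ioo_mem_nhdsGT one_pos) hchord)]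

theorem mul_mul_le_half_mul_sq_add_half_mul_sq {l μ a b : ℝ} (hμ : 0 < μ) (hμl : μ ≤ l) :
    l * a * b ≤ μ / 2 * a ^ 2 + l * (l / μ) ^ 2 / 2 * b ^ 2 := by
  have hκ : 1 ≤ l / μ := (one_le_div hμ).2 hμl
  have young : l * a * b ≤ μ / 2 * a ^ 2 + l / 2 * (l / μ) * b ^ 2 := by
    have hl : l / 2 * (l / μ) = l ^ 2 / (2 * μ) := by field_simp
    rw [hl, ← sub_nonneg]
    have : μ / 2 * a ^ 2 + l ^ 2 / (2 * μ) * b ^ 2 - l * a * b = (μ * a - l * b) ^ 2 / (2 * μ) := by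
      field_simp; ring
    rw [this]; positivity
  calc l * a * b ≤ μ / 2 * a ^ 2 + l / 2 * (l / μ) * b ^ 2 := young
    _ ≤ μ / 2 * a ^ 2 + l / 2 * (l / μ) ^ 2 * b ^ 2 := by
        gcongr
        · linarith
        · nlinarith
    _ = μ / 2 * a ^ 2 + l * (l / μ) ^ 2 / 2 * b ^ 2 := by ring

theorem Psi_descent_inequality_general
    {p : ℕ} {H : Type*} [NormedAddCommGroup H] [InnerProductSpace ℝ H] [CompleteSpace H]
    (M : H → EuclideanSpace ℝ (Fin p) → ℝ)
    (gT : H → EuclideanSpace ℝ (Fin p) → H)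
    (l μ : ℝ) (hμpos : 0 < μ) (hμl : μ ≤ l)
    (hgT : ∀ T θ, HasGradientAt (fun T' => M T' θ) (gT T θ) T)
    (hLip₃ : ∀ T T' θ, ‖gT T' θ - gT T θ‖ ≤ l * ‖T' - T‖)
    (hLip₄ : ∀ T θ θ', ‖gT T θ' - gT T θ‖ ≤ l * ‖θ' - θ‖)
    (𝒯 : Set H)
    (hconc : ∀ T ∈ 𝒯, ConcaveOn ℝ Set.univ (fun θ => M T θ + (μ / 2) * ‖θ‖ ^ 2))
    (θstar : H → EuclideanSpace ℝ (Fin p))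
    (hθmax : ∀ T ∈ 𝒯, ∀ θ, M T θ ≤ M T (θstar T))
    :
    ∀ T ∈ 𝒯, ∀ T' ∈ 𝒯,
      M T' (θstar T') - M T (θstar T)
        ≤ ⟪gT T (θstar T), T' - T⟫
          + (l * (1 + (l / μ) ^ 2) / 2) * ‖T' - T‖ ^ 2 := by
  intro T hT T' _
  set θ := θstar T
  set θ' := θstar T'
  have hquad : M T θ' ≤ M T θ - μ / 2 * ‖θ' - θ‖ ^ 2 :=
    (strongConcaveOn_iff_convex.2 (hconc T hT)).le_sub_of_isMaxOn (mem_univ θ) (mem_univ θ')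
      fun θ'' _ => hθmax T hT θ''
  have hsmooth : M T' θ' ≤ M T θ' + ⟪gT T θ', T' - T⟫ + l / 2 * ‖T' - T‖ ^ 2 :=
    le_add_inner_add_of_lipschitz_gradient (fun T'' => hgT T'' θ') (fun _ _ => hLip₃ _ _ θ') T T'
  have hcross : ⟪gT T θ', T' - T⟫ ≤ ⟪gT T θ, T' - T⟫ + l * ‖θ' - θ‖ * ‖T' - T‖ :=
    calc ⟪gT T θ', T' - T⟫ = ⟪gT T θ, T' - T⟫ + ⟪gT T θ' - gT T θ, T' - T⟫ := by
          rw [inner_sub_left]; ring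
      _ ≤ ⟪gT T θ, T' - T⟫ + ‖gT T θ' - gT T θ‖ * ‖T' - T‖ := by
          gcongr; exact real_inner_le_norm _ _
      _ ≤ ⟪gT T θ, T' - T⟫ + l * ‖θ' - θ‖ * ‖T' - T‖ := by
          gcongr; exact hLip₄ T θ θ'
  have hyoung := mul_mul_le_half_mul_sq_add_half_mul_sq (a := ‖θ' - θ‖) (b := ‖T' - T‖) hμpos hμl
  linarith

/-- In the setting of Statement 11, with
`Ψ(T) := max_θ M(T,θ) = M(T,θ*[T])` and `κ = l/μ`, for all `T, T̃ ∈ 𝒯`: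
`Ψ(T̃) − Ψ(T) ≤ ⟪∂_TM(T,θ*[T]), T̃ − T⟫ + (L₂/2)‖T̃ − T‖²` with `L₂ = l(1+κ²)`. -/
theorem Psi_descent_inequality
    {p : ℕ} {H : Type*} [NormedAddCommGroup H] [InnerProductSpace ℝ H] [CompleteSpace H]
    (M : H → EuclideanSpace ℝ (Fin p) → ℝ)
    (gT : H → EuclideanSpace ℝ (Fin p) → H)
    (gθ : H → EuclideanSpace ℝ (Fin p) → EuclideanSpace ℝ (Fin p))
    (l μ : ℝ) (hμpos : 0 < μ) (hμl : μ ≤ l)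
    (hgT : ∀ T θ, HasGradientAt (fun T' => M T' θ) (gT T θ) T)
    (hgθ : ∀ T θ, HasGradientAt (fun θ' => M T θ') (gθ T θ) θ)
    (hLip₁ : ∀ T T' θ, ‖gθ T' θ - gθ T θ‖ ≤ l * ‖T' - T‖)
    (hLip₂ : ∀ T θ θ', ‖gθ T θ' - gθ T θ‖ ≤ l * ‖θ' - θ‖)
    (hLip₃ : ∀ T T' θ, ‖gT T' θ - gT T θ‖ ≤ l * ‖T' - T‖)
    (hLip₄ : ∀ T θ θ', ‖gT T θ' - gT T θ‖ ≤ l * ‖θ' - θ‖)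
    (𝒯 : Set H)
    (hconc : ∀ T ∈ 𝒯, ConcaveOn ℝ Set.univ (fun θ => M T θ + (μ / 2) * ‖θ‖ ^ 2))
    (θstar : H → EuclideanSpace ℝ (Fin p))
    (hθmax : ∀ T ∈ 𝒯, ∀ θ, M T θ ≤ M T (θstar T))
    (hθuniq : ∀ T ∈ 𝒯, ∀ θ, (∀ θ', M T θ' ≤ M T θ) → θ = θstar T)
    :
    ∀ T ∈ 𝒯, ∀ T' ∈ 𝒯,
      M T' (θstar T') - M T (θstar T)
        ≤ ⟪gT T (θstar T), T' - T⟫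
          + (l * (1 + (l / μ) ^ 2) / 2) * ‖T' - T‖ ^ 2 :=
  Psi_descent_inequality_general M gT l μ hμpos hμl hgT hLip₃ hLip₄ 𝒯 hconc θstar hθmax
end
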